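/- For x > π/2, the second component of the solution satisfies the integral equation ψ_2(x,μ) = σ^+ sin(μx − θ) − σ^− sin(μ(π−x) − θ) − ∫_0^{π/2} (σ^+ cos(μ(t−x)) − σ^− cos(μ(x+t−π))) ψ_1(t,μ) p(t) dt − ∫_0^{π/2} (σ^+ sin(μ(t−x)) − σ^− sin(μ(x+t−π))) ψ_2(t,μ) q(t) dt − ∫_{π/2}^x cos(μ(t−x)) ψ_1(t,μ) p(t) dt − ∫_{π/2}^x sin(μ(t−x)) ψ_2(t,μ) q(t) dt. -/

import Mathlib

open Real MeasureTheory Set Filter Topology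

noncomputable section

/-- `V` is a real-valued function in the Sobolev space `W^{1,2}(0,π)`:
`V ∈ L²(0,π)` and `V` has a weak derivative `V' ∈ L²(0,π)`. -/
def SobolevW12 (V : ℝ → ℝ) : Prop :=
  MemLp V 2 (volume.restrict (Set.Ioo 0 π)) ∧
  ∃ V' : ℝ → ℝ, MemLp V' 2 (volume.restrict (Set.Ioo 0 π)) ∧
    ∀ x ∈ Set.Icc 0 π, V x = V 0 + ∫ t in (0:ℝ)..x, V' t

/-- `σ⁺ = (σ + σ⁻¹)/2`. -/
def sigmaP (σ : ℝ) : ℝ := (σ + σ⁻¹) / 2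

/-- `σ⁻ = (σ - σ⁻¹)/2`. -/
def sigmaM (σ : ℝ) : ℝ := (σ - σ⁻¹) / 2

/-- `ρ(x) = (1/2)∫₀ˣ (p+q) = ∫₀ˣ V(t) dt`. -/
def rho (V : ℝ → ℝ) (x : ℝ) : ℝ := ∫ t in (0:ℝ)..x, V t

/-- `ψ = (ψ1, ψ2)` is the solution of the Dirac system `B Y' + Ω Y = μ Y` on
`(0,π/2) ∪ (π/2,π)`, with `p = V + m`, `q = V - m`, initial condition
`ψ(0,μ) = (cos θ, -sin θ)ᵀ`, continuity up to `π/2` from the left and up to `π`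
from the right, and the jump conditions
`ψ1(π/2+0) = σ ψ1(π/2-0)`, `ψ2(π/2+0) = σ⁻¹ ψ2(π/2-0)`.
(The value at `x ≤ π/2` is the left branch, so `ψᵢ (π/2) μ = ψᵢ(π/2-0, μ)`.) -/
structure IsDiracSolution (V : ℝ → ℝ) (m θ σ : ℝ) (ψ1 ψ2 : ℝ → ℂ → ℂ) : Prop where
  init1 : ∀ μ : ℂ, ψ1 0 μ = Real.cos θ
  init2 : ∀ μ : ℂ, ψ2 0 μ = -Real.sin θ
  contLeft1 : ∀ μ : ℂ, ContinuousOn (fun x => ψ1 x μ) (Set.Icc 0 (π/2))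
  contLeft2 : ∀ μ : ℂ, ContinuousOn (fun x => ψ2 x μ) (Set.Icc 0 (π/2))
  contRight1 : ∀ μ : ℂ, ContinuousOn (fun x => ψ1 x μ) (Set.Ioc (π/2) π)
  contRight2 : ∀ μ : ℂ, ContinuousOn (fun x => ψ2 x μ) (Set.Ioc (π/2) π)
  hasDeriv1 : ∀ μ : ℂ, ∀ x ∈ Set.Ioo 0 (π/2) ∪ Set.Ioo (π/2) π,
      HasDerivAt (fun t => ψ1 t μ) ((((V x - m : ℝ) : ℂ) - μ) * ψ2 x μ) x
  hasDeriv2 : ∀ μ : ℂ, ∀ x ∈ Set.Ioo 0 (π/2) ∪ Set.Ioo (π/2) π,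
      HasDerivAt (fun t => ψ2 t μ) ((μ - ((V x + m : ℝ) : ℂ)) * ψ1 x μ) x
  jump1 : ∀ μ : ℂ, Tendsto (fun x => ψ1 x μ) (𝓝[>] (π/2)) (𝓝 ((σ : ℂ) * ψ1 (π/2) μ))
  jump2 : ∀ μ : ℂ, Tendsto (fun x => ψ2 x μ) (𝓝[>] (π/2)) (𝓝 ((σ : ℂ)⁻¹ * ψ2 (π/2) μ))

/-!
If `(u, v)` solves `u' = (q - μ) v`, `v' = (μ - p) u` and the kernel pair `(S, C)` solves
`S' = μ C`, `C' = -μ S`, then `S u - C v` is a primitive of `C u p + S v q`, so every integral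
in the equation is a boundary term. On `(π/2, x)` take `(S, C) = (sin μ(t-x), cos μ(t-x))`,
whose boundary term at `x` is `-ψ2(x)`. On `(0, π/2)` take the `σ⁺, σ⁻` combination of the
statement: as `σ⁺ + σ⁻ = σ` and `σ⁺ - σ⁻ = σ⁻¹`, its value at `π/2` is
`(σ sin α, σ⁻¹ cos α)` with `α = μ(π/2 - x)`, so by the jump conditions its boundary term at
`π/2` cancels that of the right interval, while the one at `0` gives
`σ⁺ sin(μx - θ) - σ⁻ sin(μ(π-x) - θ)`.
-/

theorem SobolevW12.intervalIntegrable {V : ℝ → ℝ} (hV : SobolevW12 V) :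
    IntervalIntegrable V volume 0 π := by
  have : IsFiniteMeasure (volume.restrict (Ioo 0 π)) := by
    constructor; simp [Real.volume_Ioo]
  rw [intervalIntegrable_iff_integrableOn_Ioc_of_le pi_pos.le, integrableOn_Ioc_iff_integrableOn_Ioo]
  exact hV.1.integrable one_le_two

theorem continuousOn_update_Icc_of_tendsto {E : Type*} [TopologicalSpace E] {f : ℝ → E}
    {a b : ℝ} {L : E} (hf : ContinuousOn f (Ioc a b)) (hL : Tendsto f (𝓝[>] a) (𝓝 L)) :
    ContinuousOn (Function.update f a L) (Icc a b) := by
  intro t ht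
  rcases ht.1.eq_or_lt with rfl | hat
  · exact continuousWithinAt_update_same.2 <| hL.mono_left <| nhdsWithin_mono _
      fun s hs => lt_of_le_of_ne hs.1.1 (Ne.symm hs.2)
  · rw [continuousWithinAt_update_of_ne hat.ne']
    refine (hf t ⟨hat, ht.2⟩).mono_of_mem_nhdsWithin ?_
    exact mem_nhdsWithin.2 ⟨Ioi a, isOpen_Ioi, hat, fun s hs => ⟨hs.1, hs.2.2⟩⟩

theorem hasDerivAt_sin_mul_sub (μ c : ℂ) (t : ℝ) :
    HasDerivAt (fun s : ℝ => Complex.sin (μ * (s - c))) (μ * Complex.cos (μ * (t - c))) t := by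
  have h := ((((hasDerivAt_id (t : ℂ)).sub_const c).const_mul μ).csin).comp_ofReal
  simpa [mul_comm] using h

theorem hasDerivAt_cos_mul_sub (μ c : ℂ) (t : ℝ) :
    HasDerivAt (fun s : ℝ => Complex.cos (μ * (s - c))) (-(μ * Complex.sin (μ * (t - c)))) t := by
  have h := ((((hasDerivAt_id (t : ℂ)).sub_const c).const_mul μ).ccos).comp_ofReal
  simpa [mul_comm] using h

section DiracKernel

variable {μ : ℂ} {S C u v p q : ℝ → ℂ} {a b : ℝ}

theorem integral_dirac_kernel_eq (hab : a ≤ b)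
    (hS : ∀ t, HasDerivAt S (μ * C t) t) (hC : ∀ t, HasDerivAt C (-(μ * S t)) t)
    (hu : ContinuousOn u (Icc a b)) (hv : ContinuousOn v (Icc a b))
    (hu' : ∀ t ∈ Ioo a b, HasDerivAt u ((q t - μ) * v t) t)
    (hv' : ∀ t ∈ Ioo a b, HasDerivAt v ((μ - p t) * u t) t)
    (hp : IntervalIntegrable p volume a b) (hq : IntervalIntegrable q volume a b) :
    (∫ t in a..b, C t * u t * p t) + (∫ t in a..b, S t * v t * q t)
      = (S b * u b - C b * v b) - (S a * u a - C a * v a) := by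
  have hScont : Continuous S := continuous_iff_continuousAt.2 fun t => (hS t).continuousAt
  have hCcont : Continuous C := continuous_iff_continuousAt.2 fun t => (hC t).continuousAt
  have hint1 : IntervalIntegrable (fun t => C t * u t * p t) volume a b :=
    hp.continuousOn_mul (hCcont.continuousOn.mul (uIcc_of_le hab ▸ hu))
  have hint2 : IntervalIntegrable (fun t => S t * v t * q t) volume a b :=
    hq.continuousOn_mul (hScont.continuousOn.mul (uIcc_of_le hab ▸ hv))
  rw [← intervalIntegral.integral_add hint1 hint2]
  refine intervalIntegral.integral_eq_sub_of_hasDerivAt_of_le hab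
    ((hScont.continuousOn.mul hu).sub (hCcont.continuousOn.mul hv)) (fun t ht => ?_)
    (hint1.add hint2)
  exact (((hS t).mul (hu' t ht)).sub ((hC t).mul (hv' t ht))).congr_deriv (by ring)

theorem integral_dirac_kernel_eq_of_tendsto {ua va : ℂ} (hab : a < b)
    (hS : ∀ t, HasDerivAt S (μ * C t) t) (hC : ∀ t, HasDerivAt C (-(μ * S t)) t)
    (hu : ContinuousOn u (Ioc a b)) (hv : ContinuousOn v (Ioc a b))
    (hua : Tendsto u (𝓝[>] a) (𝓝 ua)) (hva : Tendsto v (𝓝[>] a) (𝓝 va))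
    (hu' : ∀ t ∈ Ioo a b, HasDerivAt u ((q t - μ) * v t) t)
    (hv' : ∀ t ∈ Ioo a b, HasDerivAt v ((μ - p t) * u t) t)
    (hp : IntervalIntegrable p volume a b) (hq : IntervalIntegrable q volume a b) :
    (∫ t in a..b, C t * u t * p t) + (∫ t in a..b, S t * v t * q t)
      = (S b * u b - C b * v b) - (S a * ua - C a * va) := by
  have hupd {w : ℝ → ℂ} {wa : ℂ} {t : ℝ} (ht : a < t) : Function.update w a wa t = w t :=
    Function.update_of_ne ht.ne' _ _
  have hderiv {w : ℝ → ℂ} {wa w' : ℂ} {t : ℝ} (ht : a < t) (h : HasDerivAt w w' t) :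
      HasDerivAt (Function.update w a wa) w' t :=
    h.congr_of_eventuallyEq <| (eventually_ne_nhds ht.ne').mono fun s hs => Function.update_of_ne hs _ _
  have key := integral_dirac_kernel_eq hab.le hS hC (continuousOn_update_Icc_of_tendsto hu hua)
    (continuousOn_update_Icc_of_tendsto hv hva)
    (fun t ht => hupd ht.1 ▸ hderiv ht.1 (hu' t ht))
    (fun t ht => hupd ht.1 ▸ hderiv ht.1 (hv' t ht)) hp hq
  have hint {f w g : ℝ → ℂ} {wa : ℂ} :
      ∫ t in a..b, f t * Function.update w a wa t * g t = ∫ t in a..b, f t * w t * g t :=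
    intervalIntegral.integral_congr_Ioo_of_le hab.le fun t ht => by rw [hupd ht.1]
  rwa [hint, hint, hupd hab, hupd hab, Function.update_self, Function.update_self] at key

end DiracKernel

theorem IntervalIntegrable.ofReal {f : ℝ → ℝ} {a b : ℝ} (hf : IntervalIntegrable f volume a b) :
    IntervalIntegrable (fun t => (f t : ℂ)) volume a b :=
  ⟨hf.1.ofReal, hf.2.ofReal⟩

theorem sigmaP_add_sigmaM_ofReal (σ : ℝ) : (sigmaP σ : ℂ) + sigmaM σ = σ := by
  push_cast [sigmaP, sigmaM]; ring

theorem sigmaP_sub_sigmaM_ofReal (σ : ℝ) : (sigmaP σ : ℂ) - sigmaM σ = (σ : ℂ)⁻¹ := by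
  push_cast [sigmaP, sigmaM]; ring

namespace IsDiracSolution

variable {V : ℝ → ℝ} {m θ σ : ℝ} {ψ1 ψ2 : ℝ → ℂ → ℂ}

theorem integral_zero_pi_div_two (hψ : IsDiracSolution V m θ σ ψ1 ψ2)
    (hV : IntervalIntegrable V volume 0 (π/2)) (μ : ℂ) (x : ℝ) :
    (∫ t in (0:ℝ)..(π/2),
        ((sigmaP σ : ℂ) * Complex.cos (μ * ((t : ℂ) - (x : ℂ)))
          - (sigmaM σ : ℂ) * Complex.cos (μ * ((x : ℂ) + (t : ℂ) - (π : ℂ))))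
        * ψ1 t μ * ((V t + m : ℝ) : ℂ))
      + (∫ t in (0:ℝ)..(π/2),
        ((sigmaP σ : ℂ) * Complex.sin (μ * ((t : ℂ) - (x : ℂ)))
          - (sigmaM σ : ℂ) * Complex.sin (μ * ((x : ℂ) + (t : ℂ) - (π : ℂ))))
        * ψ2 t μ * ((V t - m : ℝ) : ℂ))
      = (σ : ℂ) * Complex.sin (μ * ((π / 2 : ℝ) - x : ℝ)) * ψ1 (π/2) μ
        - (σ : ℂ)⁻¹ * Complex.cos (μ * ((π / 2 : ℝ) - x : ℝ)) * ψ2 (π/2) μ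
        + (sigmaP σ : ℂ) * Complex.sin (μ * (x : ℂ) - (θ : ℂ))
        - (sigmaM σ : ℂ) * Complex.sin (μ * ((π : ℝ) - x : ℝ) - (θ : ℂ)) := by
  have hshift : ∀ s : ℝ, (x : ℂ) + s - π = s - ((π - x : ℝ) : ℂ) := fun s => by push_cast; ring
  simp only [hshift]
  rw [integral_dirac_kernel_eq (by positivity)
    (fun t => (((hasDerivAt_sin_mul_sub μ x t).const_mul _).fun_sub
      ((hasDerivAt_sin_mul_sub μ _ t).const_mul _)).congr_deriv (by ring))
    (fun t => (((hasDerivAt_cos_mul_sub μ x t).const_mul _).fun_sub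
      ((hasDerivAt_cos_mul_sub μ _ t).const_mul _)).congr_deriv (by ring))
    (hψ.contLeft1 μ) (hψ.contLeft2 μ)
    (fun t ht => hψ.hasDeriv1 μ t (Or.inl ht)) (fun t ht => hψ.hasDeriv2 μ t (Or.inl ht))
    (hV.add intervalIntegrable_const).ofReal (hV.sub intervalIntegrable_const).ofReal,
    hψ.init1, hψ.init2]
  have e1 : μ * (((π/2 : ℝ) : ℂ) - ((π - x : ℝ) : ℂ)) = -(μ * ((π/2 - x : ℝ) : ℂ)) := by
    push_cast; ring
  have e2 : μ * (((π/2 : ℝ) : ℂ) - x) = μ * ((π/2 - x : ℝ) : ℂ) := by push_cast; ring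
  have e3 : μ * (((0 : ℝ) : ℂ) - x) = -(μ * x) := by push_cast; ring
  have e4 : μ * (((0 : ℝ) : ℂ) - ((π - x : ℝ) : ℂ)) = -(μ * ((π - x : ℝ) : ℂ)) := by
    push_cast; ring
  rw [e1, e2, e3, e4]
  simp only [Complex.sin_neg, Complex.cos_neg, Complex.sin_sub, ← Complex.ofReal_cos,
    ← Complex.ofReal_sin]
  linear_combination (Complex.sin (μ * ((π/2 - x : ℝ) : ℂ)) * ψ1 (π/2) μ) * sigmaP_add_sigmaM_ofReal σ
    - (Complex.cos (μ * ((π/2 - x : ℝ) : ℂ)) * ψ2 (π/2) μ) * sigmaP_sub_sigmaM_ofReal σ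

theorem integral_pi_div_two (hψ : IsDiracSolution V m θ σ ψ1 ψ2) {x : ℝ}
    (hx : x ∈ Ioc (π/2) π) (hV : IntervalIntegrable V volume (π/2) x) (μ : ℂ) :
    (∫ t in (π/2)..x, Complex.cos (μ * ((t : ℂ) - (x : ℂ))) * ψ1 t μ * ((V t + m : ℝ) : ℂ))
      + (∫ t in (π/2)..x, Complex.sin (μ * ((t : ℂ) - (x : ℂ))) * ψ2 t μ * ((V t - m : ℝ) : ℂ))
      = -ψ2 x μ - ((σ : ℂ) * Complex.sin (μ * ((π / 2 : ℝ) - x : ℝ)) * ψ1 (π/2) μ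
        - (σ : ℂ)⁻¹ * Complex.cos (μ * ((π / 2 : ℝ) - x : ℝ)) * ψ2 (π/2) μ) := by
  have hmem : ∀ t ∈ Ioo (π/2) x, t ∈ Ioo 0 (π/2) ∪ Ioo (π/2) π := fun t ht =>
    Or.inr ⟨ht.1, ht.2.trans_le hx.2⟩
  have hsub : Ioc (π/2) x ⊆ Ioc (π/2) π := Ioc_subset_Ioc_right hx.2
  rw [integral_dirac_kernel_eq_of_tendsto hx.1
    (hasDerivAt_sin_mul_sub μ x) (hasDerivAt_cos_mul_sub μ x)
    ((hψ.contRight1 μ).mono hsub) ((hψ.contRight2 μ).mono hsub) (hψ.jump1 μ) (hψ.jump2 μ)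
    (fun t ht => hψ.hasDeriv1 μ t (hmem t ht)) (fun t ht => hψ.hasDeriv2 μ t (hmem t ht))
    (hV.add intervalIntegrable_const).ofReal (hV.sub intervalIntegrable_const).ofReal]
  have e : μ * (((π/2 : ℝ) : ℂ) - x) = μ * ((π/2 - x : ℝ) : ℂ) := by push_cast; ring
  rw [sub_self, mul_zero, Complex.sin_zero, Complex.cos_zero, e]
  ring

end IsDiracSolution

theorem dirac_integral_equation_psi2_right_general
    (V : ℝ → ℝ) (m θ σ : ℝ)
    (hV : SobolevW12 V)
    (ψ1 ψ2 : ℝ → ℂ → ℂ) (hψ : IsDiracSolution V m θ σ ψ1 ψ2)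
    (μ : ℂ) (x : ℝ) (hx : x ∈ Set.Ioo (π/2) π) :
    ψ2 x μ = (sigmaP σ : ℂ) * Complex.sin (μ * (x : ℂ) - (θ : ℂ))
      - (sigmaM σ : ℂ) * Complex.sin (μ * ((π : ℝ) - x : ℝ) - (θ : ℂ))
      - (∫ t in (0:ℝ)..(π/2),
          ((sigmaP σ : ℂ) * Complex.cos (μ * ((t : ℂ) - (x : ℂ)))
            - (sigmaM σ : ℂ) * Complex.cos (μ * ((x : ℂ) + (t : ℂ) - (π : ℂ))))
          * ψ1 t μ * ((V t + m : ℝ) : ℂ))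
      - (∫ t in (0:ℝ)..(π/2),
          ((sigmaP σ : ℂ) * Complex.sin (μ * ((t : ℂ) - (x : ℂ)))
            - (sigmaM σ : ℂ) * Complex.sin (μ * ((x : ℂ) + (t : ℂ) - (π : ℂ))))
          * ψ2 t μ * ((V t - m : ℝ) : ℂ))
      - (∫ t in (π/2)..x, Complex.cos (μ * ((t : ℂ) - (x : ℂ))) * ψ1 t μ * ((V t + m : ℝ) : ℂ))
      - (∫ t in (π/2)..x, Complex.sin (μ * ((t : ℂ) - (x : ℂ))) * ψ2 t μ * ((V t - m : ℝ) : ℂ)) := by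
  have hπ : 0 < π / 2 := by positivity
  have hVint := hV.intervalIntegrable
  have hleft := hψ.integral_zero_pi_div_two (hVint.mono_set <| by
    rw [uIcc_of_le hπ.le, uIcc_of_le pi_pos.le]; exact Icc_subset_Icc_right (by linarith)) μ x
  have hright := hψ.integral_pi_div_two (Ioo_subset_Ioc_self hx) (hVint.mono_set <| by
    rw [uIcc_of_le hx.1.le, uIcc_of_le pi_pos.le]; exact Icc_subset_Icc hπ.le hx.2.le) μ
  linear_combination hleft + hright

/-- for `x > π/2`, the second component satisfies the integral equation
`ψ2(x,μ) = σ⁺ sin(μx-θ) - σ⁻ sin(μ(π-x)-θ)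
  - ∫₀^{π/2} (σ⁺ cos(μ(t-x)) - σ⁻ cos(μ(x+t-π))) ψ1(t,μ) p(t) dt
  - ∫₀^{π/2} (σ⁺ sin(μ(t-x)) - σ⁻ sin(μ(x+t-π))) ψ2(t,μ) q(t) dt
  - ∫_{π/2}^x cos(μ(t-x)) ψ1(t,μ) p(t) dt - ∫_{π/2}^x sin(μ(t-x)) ψ2(t,μ) q(t) dt`. -/
theorem dirac_integral_equation_psi2_right
    (V : ℝ → ℝ) (m θ β σ : ℝ)
    (hθ : θ ∈ Set.Ico 0 π) (hβ : β ∈ Set.Ico 0 π) (hσ : 0 < σ)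
    (hV : SobolevW12 V) (hV0 : (∫ t in (0:ℝ)..π, V t) = 0)
    (ψ1 ψ2 : ℝ → ℂ → ℂ) (hψ : IsDiracSolution V m θ σ ψ1 ψ2)
    (μ : ℂ) (x : ℝ) (hx : x ∈ Set.Ioo (π/2) π) :
    ψ2 x μ = (sigmaP σ : ℂ) * Complex.sin (μ * (x : ℂ) - (θ : ℂ))
      - (sigmaM σ : ℂ) * Complex.sin (μ * ((π : ℝ) - x : ℝ) - (θ : ℂ))
      - (∫ t in (0:ℝ)..(π/2),
          ((sigmaP σ : ℂ) * Complex.cos (μ * ((t : ℂ) - (x : ℂ)))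
            - (sigmaM σ : ℂ) * Complex.cos (μ * ((x : ℂ) + (t : ℂ) - (π : ℂ))))
          * ψ1 t μ * ((V t + m : ℝ) : ℂ))
      - (∫ t in (0:ℝ)..(π/2),
          ((sigmaP σ : ℂ) * Complex.sin (μ * ((t : ℂ) - (x : ℂ)))
            - (sigmaM σ : ℂ) * Complex.sin (μ * ((x : ℂ) + (t : ℂ) - (π : ℂ))))
          * ψ2 t μ * ((V t - m : ℝ) : ℂ))
      - (∫ t in (π/2)..x, Complex.cos (μ * ((t : ℂ) - (x : ℂ))) * ψ1 t μ * ((V t + m : ℝ) : ℂ))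
      - (∫ t in (π/2)..x, Complex.sin (μ * ((t : ℂ) - (x : ℂ))) * ψ2 t μ * ((V t - m : ℝ) : ℂ)) :=
  dirac_integral_equation_psi2_right_general V m θ σ hV ψ1 ψ2 hψ μ x hx
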